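/- The constant (k+1)^2 in the one-dimensional discrete trace inequality is sharp: for every natural number k there exists a nonzero polynomial p : ℝ → ℝ of degree at most k such that p(1)^2 = (k+1)^2 · ∫₀¹ p(x)^2 dx. -/

import Mathlib

/-!
The extremal polynomial is the reproducing kernel `K = ∑_{n ≤ k} (2n+1) Lₙ(1) Lₙ` of `p ↦ p(1)`
on polynomials of degree `≤ k` in `L²(0,1)`, where `Lₙ` are the shifted Legendre polynomials.
Since `Lₙ(1) = (-1)ⁿ` and `∫₀¹ Lₘ Lₙ = δₘₙ / (2n+1)`, both `K(1)` and `∫₀¹ K²` equal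
`∑_{n ≤ k} (2n+1) = (k+1)²`, so `K(1)² = (k+1)² ∫₀¹ K²`. Orthogonality and the norms follow from
Rodrigues' formula `n! Lₙ = Dⁿ (xⁿ (1-x)ⁿ)` by `n` integrations by parts (the boundary terms
vanish because `xⁿ (1-x)ⁿ` has zeros of order `n` at `0` and `1`) and the Beta integral
`∫₀¹ xⁿ (1-x)ⁿ = n!² / (2n+1)!`.
-/

open Polynomial Finset
open scoped Nat

lemma isRoot_iterate_derivative_of_pow_dvd {R : Type*} [CommRing R] {p : R[X]} {t : R} {n i : ℕ}
    (h : (X - C t) ^ n ∣ p) (hi : i < n) : (derivative^[i] p).IsRoot t :=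
  dvd_iff_isRoot.mp <| (dvd_pow_self _ (Nat.sub_ne_zero_of_lt hi)).trans
    (pow_sub_dvd_iterate_derivative_of_pow_dvd i h)

lemma iterate_derivative_eq_C_of_natDegree_le {R : Type*} [Semiring R] {p : R[X]} {n : ℕ}
    (hp : p.natDegree ≤ n) : derivative^[n] p = C (n ! * p.coeff n) := by
  rw [eq_C_of_natDegree_le_zero ((natDegree_iterate_derivative p n).trans (by omega)),
    coeff_iterate_derivative, zero_add, Nat.descFactorial_self, nsmul_eq_mul]

noncomputable def unitIntegral : ℝ[X] →ₗ[ℝ] ℝ where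
  toFun p := ∫ x in (0 : ℝ)..1, p.eval x
  map_add' p q := by
    simp only [eval_add]
    exact intervalIntegral.integral_add (p.continuous.intervalIntegrable _ _)
      (q.continuous.intervalIntegrable _ _)
  map_smul' c p := by
    simp only [eval_smul, smul_eq_mul, RingHom.id_apply]
    exact intervalIntegral.integral_const_mul c _

lemma unitIntegral_apply (p : ℝ[X]) : unitIntegral p = ∫ x in (0 : ℝ)..1, p.eval x := rfl

lemma unitIntegral_C_mul (c : ℝ) (p : ℝ[X]) : unitIntegral (C c * p) = c * unitIntegral p := by
  rw [← smul_eq_C_mul, map_smul, smul_eq_mul]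

lemma unitIntegral_derivative (p : ℝ[X]) :
    unitIntegral (derivative p) = p.eval 1 - p.eval 0 :=
  intervalIntegral.integral_eq_sub_of_hasDerivAt (fun x _ ↦ p.hasDerivAt x)
    (p.derivative.continuous.intervalIntegrable _ _)

lemma unitIntegral_derivative_mul (f g : ℝ[X]) :
    unitIntegral (derivative f * g) =
      f.eval 1 * g.eval 1 - f.eval 0 * g.eval 0 - unitIntegral (f * derivative g) := by
  have h := unitIntegral_derivative (f * g)
  rw [derivative_mul, map_add, eval_mul, eval_mul] at h
  linarith

lemma unitIntegral_iterate_derivative_mul {n : ℕ} {f : ℝ[X]}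
    (h0 : ∀ i < n, (derivative^[i] f).IsRoot 0) (h1 : ∀ i < n, (derivative^[i] f).IsRoot 1)
    (g : ℝ[X]) :
    unitIntegral (derivative^[n] f * g) = (-1) ^ n * unitIntegral (f * derivative^[n] g) := by
  induction n generalizing g with
  | zero => simp
  | succ n ih =>
    rw [Function.iterate_succ_apply', unitIntegral_derivative_mul, (h0 n n.lt_succ_self).eq_zero,
      (h1 n n.lt_succ_self).eq_zero,
      ih (fun i hi ↦ h0 i (hi.trans n.lt_succ_self))
        (fun i hi ↦ h1 i (hi.trans n.lt_succ_self)),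
      ← Function.iterate_succ_apply]
    ring

lemma unitIntegral_X_pow (a : ℕ) : unitIntegral (X ^ a) = 1 / (a + 1) := by
  simp [unitIntegral_apply, integral_pow]

lemma unitIntegral_X_pow_mul_one_sub_X_pow (a b : ℕ) :
    unitIntegral (X ^ a * (1 - X) ^ b) = a ! * b ! / (a + b + 1)! := by
  induction b generalizing a with
  | zero =>
    rw [pow_zero, mul_one, unitIntegral_X_pow, add_zero, Nat.factorial_succ]
    push_cast
    field_simp
    simp
  | succ b ih =>
    have hderiv : derivative (X ^ (a + 1) * (1 - X) ^ (b + 1) : ℝ[X]) =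
        C (a + 1 : ℝ) * (X ^ a * (1 - X) ^ (b + 1)) -
          C (b + 1 : ℝ) * (X ^ (a + 1) * (1 - X) ^ b) := by
      simp only [derivative_mul, derivative_pow, derivative_sub, derivative_one, derivative_X,
        map_add, map_natCast, C_1]
      push_cast
      ring
    -- `X^(a+1) (1-X)^(b+1)` vanishes at `0` and `1`, so its derivative integrates to zero
    have hrec : (a + 1 : ℝ) * unitIntegral (X ^ a * (1 - X) ^ (b + 1)) =
        (b + 1) * unitIntegral (X ^ (a + 1) * (1 - X) ^ b) := by
      have h := unitIntegral_derivative (X ^ (a + 1) * (1 - X) ^ (b + 1))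
      rw [hderiv, map_sub, unitIntegral_C_mul, unitIntegral_C_mul] at h
      simp only [eval_mul, eval_pow, eval_X, eval_sub, eval_one, sub_self,
        zero_pow (Nat.succ_ne_zero _), mul_zero, zero_mul] at h
      linarith
    rw [ih, Nat.factorial_succ a] at hrec
    rw [show a + (b + 1) + 1 = a + 1 + b + 1 by ring, Nat.factorial_succ b]
    have ha : (a + 1 : ℝ) ≠ 0 := by positivity
    apply mul_left_cancel₀ ha
    rw [hrec]
    push_cast
    ring

noncomputable def realShiftedLegendre (n : ℕ) : ℝ[X] :=
  (shiftedLegendre n).map (Int.castRingHom ℝ)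

lemma natDegree_realShiftedLegendre (n : ℕ) : (realShiftedLegendre n).natDegree = n := by
  rw [realShiftedLegendre, natDegree_map_eq_of_injective (RingHom.injective_int _),
    natDegree_shiftedLegendre]

lemma coeff_realShiftedLegendre_self (n : ℕ) :
    (realShiftedLegendre n).coeff n = (-1) ^ n * (2 * n).choose n := by
  simp [realShiftedLegendre, coeff_shiftedLegendre, two_mul]

lemma eval_one_realShiftedLegendre (n : ℕ) : (realShiftedLegendre n).eval 1 = (-1) ^ n := by
  have h := shiftedLegendre_eval_symm n (1 : ℝ)
  simpa [realShiftedLegendre, eval_map, aeval_def, eval₂_at_zero, coeff_shiftedLegendre] using h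

lemma factorial_mul_realShiftedLegendre (n : ℕ) :
    (n ! : ℝ[X]) * realShiftedLegendre n = derivative^[n] (X ^ n * (1 - X) ^ n) := by
  simpa [realShiftedLegendre, ← iterate_derivative_map] using
    congrArg (Polynomial.map (Int.castRingHom ℝ)) (factorial_mul_shiftedLegendre_eq n)

lemma factorial_mul_unitIntegral_realShiftedLegendre_mul (n : ℕ) (q : ℝ[X]) :
    n ! * unitIntegral (realShiftedLegendre n * q) =
      (-1) ^ n * unitIntegral (X ^ n * (1 - X) ^ n * derivative^[n] q) := by
  have h0 : (X - C 0) ^ n ∣ (X ^ n * (1 - X) ^ n : ℝ[X]) := by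
    rw [C_0, sub_zero]
    exact dvd_mul_right _ _
  have h1 : (X - C 1) ^ n ∣ (X ^ n * (1 - X) ^ n : ℝ[X]) :=
    (pow_dvd_pow_of_dvd (Dvd.intro (-1) (by rw [C_1]; ring)) n).trans (dvd_mul_left _ _)
  rw [← unitIntegral_C_mul, ← mul_assoc, C_eq_natCast, factorial_mul_realShiftedLegendre,
    unitIntegral_iterate_derivative_mul (fun i hi ↦ isRoot_iterate_derivative_of_pow_dvd h0 hi)
      (fun i hi ↦ isRoot_iterate_derivative_of_pow_dvd h1 hi)]

lemma unitIntegral_realShiftedLegendre_mul_of_natDegree_lt {n : ℕ} {q : ℝ[X]}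
    (hq : q.natDegree < n) : unitIntegral (realShiftedLegendre n * q) = 0 := by
  have h := factorial_mul_unitIntegral_realShiftedLegendre_mul n q
  rw [iterate_derivative_eq_zero hq, mul_zero, map_zero, mul_zero] at h
  exact (mul_eq_zero.mp h).resolve_left (by positivity)

lemma unitIntegral_realShiftedLegendre_mul_self (n : ℕ) :
    unitIntegral (realShiftedLegendre n * realShiftedLegendre n) = 1 / (2 * n + 1) := by
  have h := factorial_mul_unitIntegral_realShiftedLegendre_mul n (realShiftedLegendre n)
  rw [iterate_derivative_eq_C_of_natDegree_le (natDegree_realShiftedLegendre n).le,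
    coeff_realShiftedLegendre_self, mul_comm (X ^ n * _), unitIntegral_C_mul,
    unitIntegral_X_pow_mul_one_sub_X_pow, show n + n + 1 = 2 * n + 1 by ring,
    Nat.factorial_succ, ← Nat.choose_mul_factorial_mul_factorial (by omega : n ≤ 2 * n),
    show 2 * n - n = n by omega] at h
  have := Nat.factorial_ne_zero n
  have := Nat.choose_pos (by omega : n ≤ 2 * n)
  field_simp at h ⊢
  rw [← pow_mul, mul_comm n 2, pow_mul, neg_one_sq, one_pow, mul_one] at h
  push_cast at h
  have hpos : (0 : ℝ) < (2 * n).choose n * n ! * n ! := by positivity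
  exact mul_right_cancel₀ hpos.ne' (by linear_combination h)

lemma unitIntegral_realShiftedLegendre_mul_realShiftedLegendre (m n : ℕ) :
    unitIntegral (realShiftedLegendre m * realShiftedLegendre n) =
      if m = n then 1 / (2 * n + 1 : ℝ) else 0 := by
  rcases lt_trichotomy m n with h | rfl | h
  · rw [mul_comm, unitIntegral_realShiftedLegendre_mul_of_natDegree_lt
      ((natDegree_realShiftedLegendre m).trans_lt h), if_neg h.ne]
  · rw [unitIntegral_realShiftedLegendre_mul_self, if_pos rfl]
  · rw [unitIntegral_realShiftedLegendre_mul_of_natDegree_lt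
      ((natDegree_realShiftedLegendre n).trans_lt h), if_neg h.ne']

lemma unitIntegral_sum_realShiftedLegendre_sq (s : Finset ℕ) (c : ℕ → ℝ) :
    unitIntegral ((∑ n ∈ s, C (c n) * realShiftedLegendre n) ^ 2) =
      ∑ n ∈ s, c n ^ 2 / (2 * n + 1) := by
  rw [sq, sum_mul_sum, map_sum]
  refine sum_congr rfl fun m hm ↦ ?_
  have hterm (j : ℕ) : C (c m) * realShiftedLegendre m * (C (c j) * realShiftedLegendre j) =
      C (c m * c j) * (realShiftedLegendre m * realShiftedLegendre j) := by
    rw [C_mul]; ring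
  rw [map_sum]
  simp_rw [hterm, unitIntegral_C_mul,
    unitIntegral_realShiftedLegendre_mul_realShiftedLegendre, mul_ite, mul_zero]
  rw [sum_ite_eq, if_pos hm]
  ring

lemma sum_range_two_mul_add_one (m : ℕ) : ∑ n ∈ range m, (2 * n + 1 : ℝ) = m ^ 2 := by
  induction m with
  | zero => simp
  | succ m ih => rw [sum_range_succ, ih]; push_cast; ring

noncomputable def traceKernel (k : ℕ) : ℝ[X] :=
  ∑ n ∈ range (k + 1), C ((-1) ^ n * (2 * n + 1 : ℝ)) * realShiftedLegendre n

lemma natDegree_traceKernel_le (k : ℕ) : (traceKernel k).natDegree ≤ k :=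
  natDegree_sum_le_of_forall_le _ _ fun n hn ↦ (natDegree_C_mul_le _ _).trans <|
    (natDegree_realShiftedLegendre n).trans_le (mem_range_succ_iff.mp hn)

lemma eval_one_traceKernel (k : ℕ) : (traceKernel k).eval 1 = (k + 1) ^ 2 := by
  have hterm (n : ℕ) : (C ((-1) ^ n * (2 * n + 1 : ℝ)) * realShiftedLegendre n).eval 1 =
      2 * n + 1 := by
    rw [eval_mul, eval_C, eval_one_realShiftedLegendre, mul_right_comm, ← mul_pow, neg_one_mul,
      neg_neg, one_pow, one_mul]
  simp only [traceKernel, eval_finsetSum, hterm, sum_range_two_mul_add_one]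
  push_cast
  ring

lemma unitIntegral_traceKernel_sq (k : ℕ) : unitIntegral (traceKernel k ^ 2) = (k + 1) ^ 2 := by
  have hterm (n : ℕ) : ((-1) ^ n * (2 * n + 1 : ℝ)) ^ 2 / (2 * n + 1) = 2 * n + 1 := by
    rw [mul_pow, ← pow_mul, mul_comm n 2, pow_mul, neg_one_sq, one_pow, one_mul, sq,
      mul_div_cancel_right₀ _ (by positivity)]
  simp only [traceKernel, unitIntegral_sum_realShiftedLegendre_sq, hterm,
    sum_range_two_mul_add_one]
  push_cast
  ring

/-- Sharpness of the one-dimensional discrete trace inequality: for every `k`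
there is a nonzero polynomial `p` of degree at most `k` with
`p(1)^2 = (k+1)^2 * ∫ x in (0,1), p(x)^2`. -/
theorem discrete_trace_inequality_1d_sharp (k : ℕ) :
    ∃ p : Polynomial ℝ, p ≠ 0 ∧ p.degree ≤ k ∧
      (p.eval 1) ^ 2 = ((k : ℝ) + 1) ^ 2 * ∫ x in (0:ℝ)..1, (p.eval x) ^ 2 := by
  refine ⟨traceKernel k, fun h ↦ ?_,
    natDegree_le_iff_degree_le.mp (natDegree_traceKernel_le k), ?_⟩
  · have h1 := eval_one_traceKernel k
    rw [h, eval_zero] at h1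
    exact (by positivity : (0 : ℝ) < (k + 1) ^ 2).ne h1
  · have hsq : ∫ x in (0 : ℝ)..1, (traceKernel k).eval x ^ 2 =
        unitIntegral (traceKernel k ^ 2) := by
      simp only [unitIntegral_apply, eval_pow]
    rw [hsq, unitIntegral_traceKernel_sq, eval_one_traceKernel]
    ring
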